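/- Let H be a commutative weak Hopf algebra over a field k and let C be a weak bialgebra over k which is a left H-comodule bialgebra via ρ. Then the coproduct Δ̃ is multiplicative on the weak smash coproduct: for all b,c∈C and h,k∈H, Δ̃((c×h)(b×k)) = Δ̃(c×h)·Δ̃(b×k), where the product on (C⊗H)⊗(C⊗H) is componentwise. -/

import Mathlib

open TensorProduct

noncomputable section

variable (k : Type*) [Field k]
variable (H : Type*) [Ring H] [Algebra k H] [Coalgebra k H]

/-- `ε_t(h) = ε(1₍₁₎h) 1₍₂₎`, as a linear map. -/
def epsT : H →ₗ[k] H :=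
  (TensorProduct.lid k H).toLinearMap
    ∘ₗ TensorProduct.map (Coalgebra.counit : H →ₗ[k] k) (LinearMap.id : H →ₗ[k] H)
    ∘ₗ LinearMap.mulLeft k (Coalgebra.comul (R := k) (1 : H))
    ∘ₗ (TensorProduct.mk k H H).flip 1

/-- `ε_s(h) = 1₍₁₎ ε(h 1₍₂₎)`, as a linear map. -/
def epsS : H →ₗ[k] H :=
  (TensorProduct.rid k H).toLinearMap
    ∘ₗ TensorProduct.map (LinearMap.id : H →ₗ[k] H) (Coalgebra.counit : H →ₗ[k] k)
    ∘ₗ LinearMap.mulRight k (Coalgebra.comul (R := k) (1 : H))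
    ∘ₗ TensorProduct.mk k H H 1

/-- The functional `x ⊗ y ↦ ε(ax) ε(yc)`. -/
def epsPair (a c : H) : H ⊗[k] H →ₗ[k] k :=
  (TensorProduct.lid k k).toLinearMap
    ∘ₗ TensorProduct.map ((Coalgebra.counit : H →ₗ[k] k) ∘ₗ LinearMap.mulLeft k a)
        ((Coalgebra.counit : H →ₗ[k] k) ∘ₗ LinearMap.mulRight k c)

/-- The functional `x ⊗ y ↦ ε(ay) ε(xc)`. -/
def epsPair' (a c : H) : H ⊗[k] H →ₗ[k] k :=
  (TensorProduct.lid k k).toLinearMap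
    ∘ₗ TensorProduct.map ((Coalgebra.counit : H →ₗ[k] k) ∘ₗ LinearMap.mulRight k c)
        ((Coalgebra.counit : H →ₗ[k] k) ∘ₗ LinearMap.mulLeft k a)

/-- The weak bialgebra axioms for an algebra-and-coalgebra `H`. -/
def IsWeakBialgebra : Prop :=
  (∀ a b : H, Coalgebra.comul (R := k) (a * b) = Coalgebra.comul a * Coalgebra.comul b) ∧
  (∀ a b c : H,
    Coalgebra.counit (R := k) (a * b * c) = epsPair k H a c (Coalgebra.comul b)) ∧
  (∀ a b c : H,
    Coalgebra.counit (R := k) (a * b * c) = epsPair' k H a c (Coalgebra.comul b)) ∧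
  (((1 : H) ⊗ₜ[k] Coalgebra.comul (R := k) (1 : H)) *
      (TensorProduct.assoc k H H H (Coalgebra.comul (R := k) (1 : H) ⊗ₜ[k] (1 : H)))
    = TensorProduct.assoc k H H H
        (TensorProduct.map (Coalgebra.comul (R := k)) (LinearMap.id : H →ₗ[k] H)
          (Coalgebra.comul (R := k) (1 : H)))) ∧
  ((TensorProduct.assoc k H H H (Coalgebra.comul (R := k) (1 : H) ⊗ₜ[k] (1 : H))) *
      ((1 : H) ⊗ₜ[k] Coalgebra.comul (R := k) (1 : H))
    = TensorProduct.assoc k H H H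
        (TensorProduct.map (Coalgebra.comul (R := k)) (LinearMap.id : H →ₗ[k] H)
          (Coalgebra.comul (R := k) (1 : H))))

/-- The weak Hopf algebra axioms: `H` is a weak bialgebra and `S` is an antipode, i.e.
`h₁ S(h₂) = ε_t(h)`, `S(h₁) h₂ = ε_s(h)` and `S(h₁) h₂ S(h₃) = S(h)`. -/
def IsWeakHopfAlgebra (S : H →ₗ[k] H) : Prop :=
  IsWeakBialgebra k H ∧
  (∀ h : H, LinearMap.mul' k H
      (TensorProduct.map (LinearMap.id : H →ₗ[k] H) S (Coalgebra.comul (R := k) h))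
    = epsT k H h) ∧
  (∀ h : H, LinearMap.mul' k H
      (TensorProduct.map S (LinearMap.id : H →ₗ[k] H) (Coalgebra.comul (R := k) h))
    = epsS k H h) ∧
  (∀ h : H, LinearMap.mul' k H
      (TensorProduct.map (LinearMap.mul' k H ∘ₗ TensorProduct.map S (LinearMap.id : H →ₗ[k] H)) S
        (TensorProduct.map (Coalgebra.comul (R := k)) (LinearMap.id : H →ₗ[k] H)
          (Coalgebra.comul (R := k) h)))
    = S h)

variable (C : Type*) [AddCommGroup C] [Module k C] [Coalgebra k C]

/-- `(h ⊗ c) ⊗ (h' ⊗ c') ↦ hh' ⊗ (c ⊗ c')`. -/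
def mixHC : (H ⊗[k] C) ⊗[k] (H ⊗[k] C) →ₗ[k] H ⊗[k] (C ⊗[k] C) :=
  TensorProduct.map (LinearMap.mul' k H) (LinearMap.id : C ⊗[k] C →ₗ[k] C ⊗[k] C)
    ∘ₗ (TensorProduct.tensorTensorTensorComm k H C H C).toLinearMap

/-- (CC1): `ε_H(c⁽⁻¹⁾) c⁽⁰⁾ = c`. -/
def CC1 (ρ : C →ₗ[k] H ⊗[k] C) : Prop :=
  ∀ c : C, TensorProduct.lid k C
    (TensorProduct.map (Coalgebra.counit : H →ₗ[k] k) (LinearMap.id : C →ₗ[k] C) (ρ c)) = c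

/-- (CC2): `c⁽⁻¹⁾ ⊗ Δ_C(c⁽⁰⁾) = c₁⁽⁻¹⁾c₂⁽⁻¹⁾ ⊗ c₁⁽⁰⁾ ⊗ c₂⁽⁰⁾`. -/
def CC2 (ρ : C →ₗ[k] H ⊗[k] C) : Prop :=
  ∀ c : C, TensorProduct.map (LinearMap.id : H →ₗ[k] H) (Coalgebra.comul (R := k)) (ρ c)
    = mixHC k H C (TensorProduct.map ρ ρ (Coalgebra.comul c))

/-- (CC3): `c⁽⁻¹⁾ ⊗ ρ(c⁽⁰⁾) = (c⁽⁻¹⁾)₁ ⊗ (c⁽⁻¹⁾)₂ ⊗ c⁽⁰⁾`. -/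
def CC3 (ρ : C →ₗ[k] H ⊗[k] C) : Prop :=
  ∀ c : C, TensorProduct.map (LinearMap.id : H →ₗ[k] H) ρ (ρ c)
    = TensorProduct.assoc k H H C
        (TensorProduct.map (Coalgebra.comul (R := k)) (LinearMap.id : C →ₗ[k] C) (ρ c))

/-- (CC4): `c⁽⁻¹⁾ ε_C(c⁽⁰⁾) = ε_t(c⁽⁻¹⁾) ε_C(c⁽⁰⁾)`. -/
def CC4 (ρ : C →ₗ[k] H ⊗[k] C) : Prop :=
  ∀ c : C, TensorProduct.rid k H
      (TensorProduct.map (LinearMap.id : H →ₗ[k] H) (Coalgebra.counit : C →ₗ[k] k) (ρ c))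
    = TensorProduct.rid k H
      (TensorProduct.map (epsT k H) (Coalgebra.counit : C →ₗ[k] k) (ρ c))

/-- The right-hand side of (CCP3):
`c ↦ c₁⁽⁻¹⁾ε_C(c₁⁽⁰⁾)(c₂⁽⁻¹⁾)₁ ⊗ (c₂⁽⁻¹⁾)₂ ⊗ c₂⁽⁰⁾`. -/
def ccp3RHS (ρ : C →ₗ[k] H ⊗[k] C) : C →ₗ[k] H ⊗[k] (H ⊗[k] C) :=
  (TensorProduct.assoc k H H C).toLinearMap
  ∘ₗ TensorProduct.map
      (TensorProduct.map (LinearMap.mul' k H) (LinearMap.id : H →ₗ[k] H)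
        ∘ₗ (TensorProduct.assoc k H H H).symm.toLinearMap)
      (LinearMap.id : C →ₗ[k] C)
  ∘ₗ (TensorProduct.assoc k H (H ⊗[k] H) C).symm.toLinearMap
  ∘ₗ TensorProduct.map
      ((TensorProduct.rid k H).toLinearMap
        ∘ₗ TensorProduct.map (LinearMap.id : H →ₗ[k] H) (Coalgebra.counit : C →ₗ[k] k) ∘ₗ ρ)
      (TensorProduct.map (Coalgebra.comul (R := k)) (LinearMap.id : C →ₗ[k] C) ∘ₗ ρ)
  ∘ₗ (Coalgebra.comul (R := k) : C →ₗ[k] C ⊗[k] C)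

/-- The right-hand side of the symmetry condition:
`c ↦ (c₁⁽⁻¹⁾)₁c₂⁽⁻¹⁾ε_C(c₂⁽⁰⁾) ⊗ (c₁⁽⁻¹⁾)₂ ⊗ c₁⁽⁰⁾`. -/
def ccpSymRHS (ρ : C →ₗ[k] H ⊗[k] C) : C →ₗ[k] H ⊗[k] (H ⊗[k] C) :=
  (TensorProduct.assoc k H H C).toLinearMap
  ∘ₗ TensorProduct.map
      (TensorProduct.map (LinearMap.mul' k H ∘ₗ (TensorProduct.comm k H H).toLinearMap)
          (LinearMap.id : H →ₗ[k] H)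
        ∘ₗ (TensorProduct.assoc k H H H).symm.toLinearMap)
      (LinearMap.id : C →ₗ[k] C)
  ∘ₗ (TensorProduct.assoc k H (H ⊗[k] H) C).symm.toLinearMap
  ∘ₗ (TensorProduct.comm k ((H ⊗[k] H) ⊗[k] C) H).toLinearMap
  ∘ₗ TensorProduct.map
      (TensorProduct.map (Coalgebra.comul (R := k)) (LinearMap.id : C →ₗ[k] C) ∘ₗ ρ)
      ((TensorProduct.rid k H).toLinearMap
        ∘ₗ TensorProduct.map (LinearMap.id : H →ₗ[k] H) (Coalgebra.counit : C →ₗ[k] k) ∘ₗ ρ)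
  ∘ₗ (Coalgebra.comul (R := k) : C →ₗ[k] C ⊗[k] C)

/-- (CCP3). -/
def CCP3 (ρ : C →ₗ[k] H ⊗[k] C) : Prop :=
  ∀ c : C, TensorProduct.map (LinearMap.id : H →ₗ[k] H) ρ (ρ c) = ccp3RHS k H C ρ c

/-- The symmetry condition for a partial comodule coalgebra. -/
def CCPSym (ρ : C →ₗ[k] H ⊗[k] C) : Prop :=
  ∀ c : C, TensorProduct.map (LinearMap.id : H →ₗ[k] H) ρ (ρ c) = ccpSymRHS k H C ρ c

/-- `C` is a left `H`-comodule coalgebra via `ρ`. -/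
def IsComoduleCoalgebra (ρ : C →ₗ[k] H ⊗[k] C) : Prop :=
  CC1 k H C ρ ∧ CC2 k H C ρ ∧ CC3 k H C ρ ∧ CC4 k H C ρ

/-- `C` is a left partial `H`-comodule coalgebra via `ρ`. -/
def IsPartialComoduleCoalgebra (ρ : C →ₗ[k] H ⊗[k] C) : Prop :=
  CC1 k H C ρ ∧ CC2 k H C ρ ∧ CCP3 k H C ρ

/-- The smash coproduct `Δ̃(c ⊗ h) = (c₁ ⊗ c₂⁽⁻¹⁾h₁) ⊗ (c₂⁽⁰⁾ ⊗ h₂)`. -/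
def smashComul (ρ : C →ₗ[k] H ⊗[k] C) :
    C ⊗[k] H →ₗ[k] (C ⊗[k] H) ⊗[k] (C ⊗[k] H) :=
  TensorProduct.map
      (TensorProduct.map (LinearMap.id : C →ₗ[k] C) (LinearMap.mul' k H)
        ∘ₗ (TensorProduct.assoc k C H H).toLinearMap)
      (LinearMap.id : C ⊗[k] H →ₗ[k] C ⊗[k] H)
  ∘ₗ (TensorProduct.tensorTensorTensorComm k (C ⊗[k] H) C H H).toLinearMap
  ∘ₗ TensorProduct.map
      ((TensorProduct.assoc k C H C).symm.toLinearMap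
        ∘ₗ TensorProduct.map (LinearMap.id : C →ₗ[k] C) ρ
        ∘ₗ (Coalgebra.comul (R := k) : C →ₗ[k] C ⊗[k] C))
      (Coalgebra.comul (R := k) : H →ₗ[k] H ⊗[k] H)

/-- The smash counit `ε̂(c ⊗ h) = ε_C(c⁽⁰⁾) ε_H(c⁽⁻¹⁾h)`. -/
def smashCounit (ρ : C →ₗ[k] H ⊗[k] C) : C ⊗[k] H →ₗ[k] k :=
  (TensorProduct.lid k k).toLinearMap
  ∘ₗ TensorProduct.map (Coalgebra.counit : C →ₗ[k] k)
      ((Coalgebra.counit : H →ₗ[k] k) ∘ₗ LinearMap.mul' k H)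
  ∘ₗ (TensorProduct.assoc k C H H).toLinearMap
  ∘ₗ TensorProduct.map (TensorProduct.comm k H C).toLinearMap (LinearMap.id : H →ₗ[k] H)
  ∘ₗ TensorProduct.map ρ (LinearMap.id : H →ₗ[k] H)

/-- The projection `P(c ⊗ h) = c⁽⁰⁾ ⊗ h₂ ε_H(c⁽⁻¹⁾h₁)` onto the weak smash coproduct. -/
def smashP (ρ : C →ₗ[k] H ⊗[k] C) : C ⊗[k] H →ₗ[k] C ⊗[k] H :=
  (TensorProduct.lid k (C ⊗[k] H)).toLinearMap
  ∘ₗ TensorProduct.map ((Coalgebra.counit : H →ₗ[k] k) ∘ₗ LinearMap.mul' k H)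
      (LinearMap.id : C ⊗[k] H →ₗ[k] C ⊗[k] H)
  ∘ₗ (TensorProduct.tensorTensorTensorComm k H C H H).toLinearMap
  ∘ₗ TensorProduct.map ρ (Coalgebra.comul (R := k) : H →ₗ[k] H ⊗[k] H)

end


noncomputable section
variable (k : Type*) [Field k]
variable (H : Type*) [Ring H] [Algebra k H] [Coalgebra k H]
variable (C : Type*) [Ring C] [Algebra k C] [Coalgebra k C]

/-- `C` is a left `H`-comodule bialgebra via `ρ`. -/
def IsComoduleBialgebra (ρ : C →ₗ[k] H ⊗[k] C) : Prop :=
  IsComoduleCoalgebra k H C ρ ∧ (∀ c d : C, ρ (c * d) = ρ c * ρ d) ∧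
  TensorProduct.map (epsS k H) (LinearMap.id : C →ₗ[k] C) (ρ 1) = ρ 1

/-- The antipode candidate `Ŝ(c ⊗ h) = P(S_C(c⁽⁰⁾) ⊗ S_H(c⁽⁻¹⁾h))` on the smash coproduct. -/
def smashS (ρ : C →ₗ[k] H ⊗[k] C) (SC : C →ₗ[k] C) (SH : H →ₗ[k] H) :
    C ⊗[k] H →ₗ[k] C ⊗[k] H :=
  smashP k H C ρ
  ∘ₗ TensorProduct.map SC (SH ∘ₗ LinearMap.mul' k H)
  ∘ₗ (TensorProduct.assoc k C H H).toLinearMap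
  ∘ₗ TensorProduct.map (TensorProduct.comm k H C).toLinearMap (LinearMap.id : H →ₗ[k] H)
  ∘ₗ TensorProduct.map ρ (LinearMap.id : H →ₗ[k] H)

end



/-! `Δ̃` is the composite
`C ⊗ H → ((C ⊗ H) ⊗ C) ⊗ (H ⊗ H) → ((C ⊗ H) ⊗ H) ⊗ (C ⊗ H) → (C ⊗ H) ⊗ (C ⊗ H)`
of `Δ_C`, `ρ` and `Δ_H`, a rearrangement of tensor factors, and the multiplication of `H`.
Each of these maps is multiplicative (the last one because `H` is commutative), so `Δ̃` is
multiplicative on all of `C ⊗ H`, not only on `C × H`. -/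

section MultiplicativeMaps

variable {R A B A' B' D : Type*} [CommSemiring R]
  [Semiring A] [Algebra R A] [Semiring B] [Algebra R B] [Semiring A'] [Algebra R A']
  [Semiring B'] [Algebra R B'] [Semiring D] [Algebra R D]

theorem TensorProduct.map_mul_of_map_mul (f : A →ₗ[R] A') (g : B →ₗ[R] B')
    (hf : ∀ x y, f (x * y) = f x * f y) (hg : ∀ x y, g (x * y) = g x * g y) (u v : A ⊗[R] B) :
    TensorProduct.map f g (u * v) = TensorProduct.map f g u * TensorProduct.map f g v :=
  (LinearMap.map_mul_iff _).mpr (by ext; simp [hf, hg]) u v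

theorem TensorProduct.assoc_mul (x y : (A ⊗[R] B) ⊗[R] D) :
    TensorProduct.assoc R A B D (x * y)
      = TensorProduct.assoc R A B D x * TensorProduct.assoc R A B D y :=
  map_mul (Algebra.TensorProduct.assoc R R R A B D) x y

theorem TensorProduct.assoc_symm_mul (x y : A ⊗[R] (B ⊗[R] D)) :
    (TensorProduct.assoc R A B D).symm (x * y)
      = (TensorProduct.assoc R A B D).symm x * (TensorProduct.assoc R A B D).symm y :=
  map_mul (Algebra.TensorProduct.assoc R R R A B D).symm x y

theorem TensorProduct.tensorTensorTensorComm_mul (x y : (A ⊗[R] B) ⊗[R] (A' ⊗[R] B')) :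
    TensorProduct.tensorTensorTensorComm R A B A' B' (x * y)
      = TensorProduct.tensorTensorTensorComm R A B A' B' x *
        TensorProduct.tensorTensorTensorComm R A B A' B' y :=
  map_mul (Algebra.TensorProduct.tensorTensorTensorComm R R R R A B A' B') x y

theorem LinearMap.mul'_mul_of_commute (hcomm : ∀ x y : A, Commute x y) (u v : A ⊗[R] A) :
    LinearMap.mul' R A (u * v) = LinearMap.mul' R A u * LinearMap.mul' R A v :=
  (LinearMap.map_mul_iff _).mpr (by ext; simp [(hcomm _ _).mul_mul_mul_comm]) u v

end MultiplicativeMaps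

theorem smashComul_mul {k H C : Type*} [Field k] [Ring H] [Algebra k H] [Coalgebra k H]
    [Ring C] [Algebra k C] [Coalgebra k C] (hcomm : ∀ x y : H, x * y = y * x)
    (hΔH : ∀ a b : H, Coalgebra.comul (R := k) (a * b) = Coalgebra.comul a * Coalgebra.comul b)
    (hΔC : ∀ a b : C, Coalgebra.comul (R := k) (a * b) = Coalgebra.comul a * Coalgebra.comul b)
    (ρ : C →ₗ[k] H ⊗[k] C) (hρ : ∀ c d : C, ρ (c * d) = ρ c * ρ d) (x y : C ⊗[k] H) :
    smashComul k H C ρ (x * y) = smashComul k H C ρ x * smashComul k H C ρ y := by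
  have hcoaction (c d : C) :
      (TensorProduct.assoc k C H C).symm
          (TensorProduct.map LinearMap.id ρ (Coalgebra.comul (c * d)))
        = (TensorProduct.assoc k C H C).symm
            (TensorProduct.map LinearMap.id ρ (Coalgebra.comul c))
          * (TensorProduct.assoc k C H C).symm
              (TensorProduct.map LinearMap.id ρ (Coalgebra.comul d)) := by
    rw [hΔC, TensorProduct.map_mul_of_map_mul _ _ (fun _ _ => rfl) hρ,
      TensorProduct.assoc_symm_mul]
  have hmultiply (u v : (C ⊗[k] H) ⊗[k] H) :
      TensorProduct.map LinearMap.id (LinearMap.mul' k H) (TensorProduct.assoc k C H H (u * v))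
        = TensorProduct.map LinearMap.id (LinearMap.mul' k H) (TensorProduct.assoc k C H H u)
          * TensorProduct.map LinearMap.id (LinearMap.mul' k H)
              (TensorProduct.assoc k C H H v) := by
    rw [TensorProduct.assoc_mul, TensorProduct.map_mul_of_map_mul _ _ (fun _ _ => rfl)
      (LinearMap.mul'_mul_of_commute hcomm)]
  simp only [smashComul, LinearMap.comp_apply, LinearEquiv.coe_coe]
  rw [TensorProduct.map_mul_of_map_mul _ _ hcoaction hΔH,
    TensorProduct.tensorTensorTensorComm_mul,
    TensorProduct.map_mul_of_map_mul _ _ hmultiply (fun _ _ => rfl)]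

noncomputable section
variable (k : Type*) [Field k]
variable (H : Type*) [Ring H] [Algebra k H] [Coalgebra k H]
variable (C : Type*) [Ring C] [Algebra k C] [Coalgebra k C]

/-- The smash coproduct `Δ̃` is multiplicative on the weak smash coproduct `C × H`. -/
theorem smashComul_multiplicative (S : H →ₗ[k] H) (hcomm : ∀ x y : H, x * y = y * x)
    (hH : IsWeakHopfAlgebra k H S) (hC : IsWeakBialgebra k C)
    (ρ : C →ₗ[k] H ⊗[k] C) (hρ : IsComoduleBialgebra k H C ρ) :
    ∀ (b c : C) (h l : H),
      smashComul k H C ρ (smashP k H C ρ (c ⊗ₜ[k] h) * smashP k H C ρ (b ⊗ₜ[k] l))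
        = smashComul k H C ρ (smashP k H C ρ (c ⊗ₜ[k] h)) *
            smashComul k H C ρ (smashP k H C ρ (b ⊗ₜ[k] l)) := by
  intro b c h l
  exact smashComul_mul hcomm hH.1.1 hC.1 ρ hρ.2.1 _ _

end
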